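/- Let V be a finite set of qubit sites and let Q† be any linear operator lying in the linear span of the operators ∏_{j∈Y} s†_j over subsets Y ⊆ V (the empty product being the identity operator). Then: (i) for every positive integer k and every k-local operator O, the iterated commutators defined by C₀ = O and C_{m+1} = C_m Q† − Q† C_m satisfy C_{2k+1} = 0; and (ii) for every positive integer k and every k-local operator H, if H (Q†)^q |0̄⟩ = 0 for every natural number q ≤ 2k, then H (Q†)^p |0̄⟩ = 0 for every natural number p. -/

import Mathlib

open scoped BigOperators
set_option linter.unusedSectionVars false

noncomputable section

/-- The state space of a collection of qubits indexed by `V`: the complex vector space of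
functions from configurations `V → Bool` to `ℂ`. -/
abbrev QState (V : Type*) := (V → Bool) → ℂ

section Defs

variable {V : Type*} [Fintype V] [DecidableEq V]

/-- The standard basis vector associated to the configuration `f`. -/
def basisVec (f : V → Bool) : QState V := fun g => if g = f then 1 else 0

/-- The creation operator `s†_i` at site `i`. -/
def creOp (i : V) : Module.End ℂ (QState V) where
  toFun ψ := fun g => if g i = true then ψ (Function.update g i false) else 0
  map_add' ψ φ := by funext g; by_cases h : g i = true <;> simp [h]
  map_smul' a ψ := by funext g; by_cases h : g i = true <;> simp [h]

/-- The annihilation operator `s_i` at site `i`. -/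
def annOp (i : V) : Module.End ℂ (QState V) where
  toFun ψ := fun g => if g i = false then ψ (Function.update g i true) else 0
  map_add' ψ φ := by funext g; by_cases h : g i = false <;> simp [h]
  map_smul' a ψ := by funext g; by_cases h : g i = false <;> simp [h]

@[simp] lemma creOp_apply (i : V) (ψ : QState V) (g : V → Bool) :
    creOp i ψ g = if g i = true then ψ (Function.update g i false) else 0 := rfl

variable (V)

/-- The vacuum `|0̄⟩`: the basis vector of the all-false configuration. -/
def vac : QState V := basisVec (fun _ => false)

/-- The total raising operator `S† = ∑ i, s†_i`. -/
def Sdag : Module.End ℂ (QState V) := ∑ i : V, creOp i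

/-- The number operator `N̂ = ∑ i, s†_i s_i`. -/
def numOp : Module.End ℂ (QState V) := ∑ i : V, creOp i * annOp i

/-- The unnormalized Dicke state `|W^p⟩ = (S†)^p |0̄⟩`. -/
def WState (p : ℕ) : QState V := ((Sdag V) ^ p) (vac V)

variable {V}

/-- Creation operators at different sites commute. -/
lemma creOp_commute (i j : V) : Commute (creOp (V := V) i) (creOp j) := by
  rcases eq_or_ne i j with rfl | hij
  · exact Commute.refl _
  · show creOp i * creOp j = creOp j * creOp i
    refine LinearMap.ext fun ψ => funext fun g => ?_
    simp only [Module.End.mul_apply, creOp_apply]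
    by_cases hi : g i = true <;> by_cases hj : g j = true <;>
      simp [hi, hj, Function.update_of_ne hij, Function.update_of_ne hij.symm,
        Function.update_comm hij]

/-- The product `∏_{j ∈ Y} s†_j` of creation operators over a finite set `Y` of sites
(the operators commute, so the product is well defined; the empty product is the identity). -/
def creProd (Y : Finset V) : Module.End ℂ (QState V) :=
  Y.noncommProd creOp fun a _ b _ _ => creOp_commute a b

/-- The operator `O` is supported on the set of sites `X`. -/
def SupportedOn (O : Module.End ℂ (QState V)) (X : Set V) : Prop :=
  (∀ f g : V → Bool, (∃ i ∉ X, f i ≠ g i) → O (basisVec f) g = 0) ∧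
  (∀ f f' g g' : V → Bool,
    (∀ i ∈ X, f i = f' i) → (∀ i ∈ X, g i = g' i) →
    (∀ i ∉ X, f i = g i) → (∀ i ∉ X, f' i = g' i) →
    O (basisVec f) g = O (basisVec f') g')

/-- An operator is `k`-local if it is a finite sum of operators each supported
on a subset of at most `k` sites. -/
def IsKLocal (k : ℕ) (O : Module.End ℂ (QState V)) : Prop :=
  ∃ (n : ℕ) (h : Fin n → Module.End ℂ (QState V)) (X : Fin n → Finset V),
    (∀ t, SupportedOn (h t) ↑(X t)) ∧ (∀ t, (X t).card ≤ k) ∧ O = ∑ t, h t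

/-- Vertices `i` and `j` are within distance `r` in the graph `G`:
they are joined by a walk of length at most `r`. -/
def WithinDist (G : SimpleGraph V) (r : ℕ) (i j : V) : Prop :=
  ∃ w : G.Walk i j, w.length ≤ r

/-- The ball of radius `r` around vertex `i` in the graph `G`. -/
def gball (G : SimpleGraph V) (i : V) (r : ℕ) : Set V := {j | WithinDist G r i j}

/-- `diam(X) ≤ R` with respect to `G`: every two vertices of `X` are within distance `R - 1`. -/
def GDiamLE (G : SimpleGraph V) (X : Finset V) (R : ℕ) : Prop :=
  ∀ i ∈ X, ∀ j ∈ X, WithinDist G (R - 1) i j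

/-- `H` is a Hamiltonian of range `R` with respect to the graph `G`: a finite sum over
nonempty subsets `X` with `diam(X) ≤ R` of operators supported on `X`. -/
def IsRangeHam (G : SimpleGraph V) (R : ℕ) (H : Module.End ℂ (QState V)) : Prop :=
  ∃ h : Finset V → Module.End ℂ (QState V),
    (∀ X, SupportedOn (h X) ↑X) ∧
    (∀ X, h X ≠ 0 → X.Nonempty ∧ GDiamLE G X R) ∧
    H = ∑ X : Finset V, h X

/-- `H` is a `k`-local Hamiltonian of range `R` with respect to the graph `G`. -/
def IsKLocalRangeHam (G : SimpleGraph V) (k R : ℕ) (H : Module.End ℂ (QState V)) : Prop :=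
  ∃ h : Finset V → Module.End ℂ (QState V),
    (∀ X, SupportedOn (h X) ↑X) ∧
    (∀ X, h X ≠ 0 → X.Nonempty ∧ GDiamLE G X R ∧ X.card ≤ k) ∧
    H = ∑ X : Finset V, h X

/-- An invertible linear operator `M` is `δ`-locality-preserving with respect to `G` if
conjugation by `M` or `M⁻¹` increases the range of any operator by at most `δ`. -/
def LocalityPreserving (G : SimpleGraph V) (δ : ℕ) (M : QState V ≃ₗ[ℂ] QState V) : Prop :=
  ∀ R : ℕ, 0 < R → ∀ O : Module.End ℂ (QState V), IsRangeHam G R O →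
    IsRangeHam G (R + δ) (M.toLinearMap ∘ₗ O ∘ₗ M.symm.toLinearMap) ∧
    IsRangeHam G (R + δ) (M.symm.toLinearMap ∘ₗ O ∘ₗ M.toLinearMap)

end Defs

section Chain

/-- Distance between two sites of the open chain `{0, …, N-1}`. -/
def chainDist {N : ℕ} (i j : Fin N) : ℕ := ((i : ℤ) - (j : ℤ)).natAbs

/-- `diam(X) ≤ R` on the open chain: `diam(X) = 1 + max |i - j|`. -/
def ChainDiamLE {N : ℕ} (X : Finset (Fin N)) (R : ℕ) : Prop :=
  ∀ i ∈ X, ∀ j ∈ X, chainDist i j + 1 ≤ R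

/-- `H` is a Hamiltonian of range `R` on the open chain of `N` sites. -/
def IsChainRangeHam {N : ℕ} (R : ℕ) (H : Module.End ℂ (QState (Fin N))) : Prop :=
  ∃ h : Finset (Fin N) → Module.End ℂ (QState (Fin N)),
    (∀ X, SupportedOn (h X) ↑X) ∧
    (∀ X, h X ≠ 0 → X.Nonempty ∧ ChainDiamLE X R) ∧
    H = ∑ X : Finset (Fin N), h X

/-- `H` is a `k`-local Hamiltonian of range `R` on the open chain of `N` sites. -/
def IsChainKLocalRangeHam {N : ℕ} (k R : ℕ) (H : Module.End ℂ (QState (Fin N))) : Prop :=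
  ∃ h : Finset (Fin N) → Module.End ℂ (QState (Fin N)),
    (∀ X, SupportedOn (h X) ↑X) ∧
    (∀ X, h X ≠ 0 → X.Nonempty ∧ ChainDiamLE X R ∧ X.card ≤ k) ∧
    H = ∑ X : Finset (Fin N), h X

end Chain

end

/-! Split `Q† = A + B`, where `A` collects the products `∏_{j∈Y} s†_j` with `Y` meeting the
support `X` of a local term `O` and `B` the others. All these products commute, and `B` commutes
with `O`, so the iterated commutators of `O` with `Q†` and with `A` agree. Since every `s†_i`
squares to zero, `A ^ (|X| + 1) = 0`, and then `x ↦ x A - A x`, a difference of commuting left and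
right multiplications, has vanishing `(2|X| + 1)`-st power.

For the tower, write `D T = T Q† - Q† T`. From
`T (Q†)^(q+1)|0̄⟩ = (D T)(Q†)^q|0̄⟩ + Q† T (Q†)^q|0̄⟩`, `T` kills the first `N + 1` vectors
`(Q†)^q|0̄⟩` iff `T|0̄⟩ = 0` and `D T` kills the first `N`.
Iterating `2k + 1` times and using `D^(2k+1) H = 0` removes the bound on `N`. -/

section CommutatorMap

variable (R : Type*) {A : Type*} [CommRing R] [Ring A] [Algebra R A]

def commutatorMap (a : A) : Module.End R A := LinearMap.mulRight R a - LinearMap.mulLeft R a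

variable {R}

@[simp] lemma commutatorMap_apply (a x : A) : commutatorMap R a x = x * a - a * x := rfl

lemma commutatorMap_add (a b : A) :
    commutatorMap R (a + b) = commutatorMap R a + commutatorMap R b := by
  ext x
  simp only [commutatorMap_apply, LinearMap.add_apply]
  noncomm_ring

lemma Commute.commutatorMap {a b : A} (h : Commute a b) :
    Commute (commutatorMap R a) (commutatorMap R b) := by
  ext x
  simp only [Module.End.mul_apply, commutatorMap_apply, mul_sub, sub_mul, mul_assoc]
  rw [h.eq, h.left_comm]
  abel

lemma commutatorMap_pow_eq_zero {a : A} {k : ℕ} (ha : a ^ (k + 1) = 0) :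
    commutatorMap R a ^ (2 * k + 1) = 0 := by
  have hl : LinearMap.mulLeft R (-a) ^ (k + 1) = 0 := by
    rw [LinearMap.pow_mulLeft, neg_pow, ha, mul_zero, LinearMap.mulLeft_zero_eq_zero]
  have hr : LinearMap.mulRight R a ^ (k + 1) = 0 := by
    rw [LinearMap.pow_mulRight, ha, LinearMap.mulRight_zero_eq_zero]
  have hD : commutatorMap R a = LinearMap.mulRight R a + LinearMap.mulLeft R (-a) := by
    ext x
    simp [sub_eq_add_neg]
  rw [hD]
  exact (LinearMap.commute_mulLeft_right (-a) a).symm.add_pow_eq_zero_of_add_le_succ_of_pow_eq_zero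
    hr hl (by omega)

lemma Module.End.add_pow_apply_eq_pow_apply {M : Type*} [AddCommGroup M] [Module R M]
    {f g : Module.End R M} (h : Commute f g) {x : M} (hx : g x = 0) (n : ℕ) :
    ((f + g) ^ n) x = (f ^ n) x := by
  induction n with
  | zero => rfl
  | succ n ih =>
    rw [pow_succ', Module.End.mul_apply, ih, LinearMap.add_apply, ← Module.End.mul_apply g,
      ← (h.pow_left n).eq, Module.End.mul_apply, hx, map_zero, add_zero, ← Module.End.mul_apply,
      ← pow_succ']

lemma commutatorMap_add_pow_apply {a b x : A} (hab : Commute a b) (hbx : Commute b x) (n : ℕ) :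
    (commutatorMap R (a + b) ^ n) x = (commutatorMap R a ^ n) x := by
  rw [commutatorMap_add]
  exact Module.End.add_pow_apply_eq_pow_apply hab.commutatorMap (by simp [hbx.eq]) n

section Tower

variable {M : Type*} [AddCommGroup M] [Module R M] (Q : Module.End R M) (v : M)

lemma forall_lt_succ_apply_pow_eq_zero_iff (T : Module.End R M) (N : ℕ) :
    (∀ q < N + 1, T ((Q ^ q) v) = 0) ↔
      T v = 0 ∧ ∀ q < N, (commutatorMap R Q T) ((Q ^ q) v) = 0 := by
  have hstep (q : ℕ) :
      T ((Q ^ (q + 1)) v) = (commutatorMap R Q T) ((Q ^ q) v) + Q (T ((Q ^ q) v)) := by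
    simp [pow_succ']
  constructor
  · intro h
    refine ⟨by simpa using h 0 (by omega), fun q hq => ?_⟩
    have := hstep q
    rwa [h (q + 1) (by omega), h q (by omega), map_zero, add_zero, eq_comm] at this
  · rintro ⟨h0, h⟩ q hq
    induction q with
    | zero => simpa using h0
    | succ q ih => rw [hstep, h q (by omega), ih (by omega), map_zero, add_zero]

lemma forall_lt_add_apply_pow_eq_zero_iff (T : Module.End R M) (N j : ℕ) :
    (∀ q < N + j, T ((Q ^ q) v) = 0) ↔
      (∀ i < j, (commutatorMap R Q ^ i) T v = 0) ∧
        ∀ q < N, (commutatorMap R Q ^ j) T ((Q ^ q) v) = 0 := by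
  induction j generalizing N with
  | zero => simp
  | succ j ih =>
    rw [← add_assoc, add_right_comm, ih, forall_lt_succ_apply_pow_eq_zero_iff,
      Nat.forall_lt_succ_right, pow_succ', Module.End.mul_apply, and_assoc]

lemma apply_pow_eq_zero_of_commutatorMap_pow_eq_zero {T : Module.End R M} {n : ℕ}
    (hT : (commutatorMap R Q ^ n) T = 0) (hv : ∀ q < n, T ((Q ^ q) v) = 0) (p : ℕ) :
    T ((Q ^ p) v) = 0 := by
  have hcomm := ((forall_lt_add_apply_pow_eq_zero_iff Q v T 0 n).mp (by simpa using hv)).1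
  exact (forall_lt_add_apply_pow_eq_zero_iff Q v T (p + 1) n).mpr ⟨hcomm, by simp [hT]⟩ p (by omega)

end Tower

end CommutatorMap

section Configurations

variable {V : Type*} [Fintype V]

lemma basisVec_eq_single (f : V → Bool) : basisVec f = Pi.single f 1 := by
  ext g
  simp [basisVec, Pi.single_apply]

lemma Module.End.ext_basisVec {T T' : Module.End ℂ (QState V)}
    (h : ∀ f, T (basisVec f) = T' (basisVec f)) : T = T' :=
  (Pi.basisFun ℂ (V → Bool)).ext fun f => by simpa [basisVec_eq_single] using h f

lemma SupportedOn.apply_eq_zero {O : Module.End ℂ (QState V)} {X : Set V} (hO : SupportedOn O X)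
    {i : V} (hi : i ∉ X) {f g : V → Bool} (hfg : f i ≠ g i) : O (basisVec f) g = 0 :=
  hO.1 f g ⟨i, hi, hfg⟩

end Configurations

section CreationOperators

variable {V : Type*} [DecidableEq V]

lemma creOp_mul_self (i : V) : creOp (V := V) i * creOp i = 0 := by
  ext ψ g
  by_cases h : g i = true <;> simp [h]

variable [Fintype V]

lemma creOp_basisVec (i : V) (f : V → Bool) :
    creOp i (basisVec f) = if f i = true then 0 else basisVec (Function.update f i true) := by
  ext g
  by_cases hg : g i = true <;> by_cases hf : f i = true <;>
    simp [basisVec, hg, hf, Function.update_eq_iff, Function.eq_update_iff]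

lemma SupportedOn.apply_update {O : Module.End ℂ (QState V)} {X : Set V} (hO : SupportedOn O X)
    {i : V} (hi : i ∉ X) {f g : V → Bool} (hfg : f i = g i) (b : Bool) :
    O (basisVec (Function.update f i b)) (Function.update g i b) = O (basisVec f) g := by
  by_cases hout : ∀ j ∉ X, f j = g j
  · refine hO.2 _ _ _ _ (fun j hj => ?_) (fun j hj => ?_) (fun j hj => ?_) hout <;>
      by_cases hji : j = i <;> simp_all
  · push Not at hout
    obtain ⟨j, hj, hfgj⟩ := hout
    have hji : j ≠ i := by rintro rfl; exact hfgj hfg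
    rw [hO.apply_eq_zero hj hfgj, hO.apply_eq_zero hj (by simpa [hji] using hfgj)]

lemma SupportedOn.commute_creOp {O : Module.End ℂ (QState V)} {X : Set V} (hO : SupportedOn O X)
    {i : V} (hi : i ∉ X) : Commute O (creOp i) := by
  refine Module.End.ext_basisVec fun f => funext fun g => ?_
  simp only [Module.End.mul_apply, creOp_basisVec, creOp_apply]
  cases hf : f i <;> cases hg : g i
  · simp [hO.apply_eq_zero hi (f := Function.update f i true) (g := g) (by simp [hg])]
  · have := hO.apply_update hi (f := f) (g := Function.update g i false) (by simp [hf]) true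
    have hgg : Function.update g i true = g := by simp [hg]
    simpa [Function.update_idem, hgg] using this
  · simp
  · simp [hO.apply_eq_zero hi (f := f) (g := Function.update g i false) (by simp [hf])]

end CreationOperators

section CreationProducts

variable {V : Type*} [Fintype V] [DecidableEq V]

lemma creOp_commute_creProd (i : V) (Y : Finset V) : Commute (creOp i) (creProd Y) :=
  Finset.noncommProd_commute _ _ _ _ fun j _ => creOp_commute i j

lemma creProd_commute (Y Z : Finset V) : Commute (creProd Y) (creProd Z) :=
  Finset.noncommProd_commute _ _ _ _ fun j _ => (creOp_commute_creProd j Y).symm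

lemma creProd_eq_creOp_mul {i : V} {Y : Finset V} (hi : i ∈ Y) :
    creProd Y = creOp i * creProd (Y.erase i) :=
  (Finset.mul_noncommProd_erase Y hi creOp _).symm

lemma SupportedOn.commute_creProd {O : Module.End ℂ (QState V)} {X : Finset V}
    (hO : SupportedOn O ↑X) {Y : Finset V} (hYX : Disjoint Y X) : Commute O (creProd Y) :=
  Finset.noncommProd_commute _ _ _ _ fun _ hj =>
    hO.commute_creOp (Finset.mem_coe.not.mpr (Finset.disjoint_left.mp hYX hj))

variable (V) in
def creSpan (𝒴 : Set (Finset V)) : Submodule ℂ (Module.End ℂ (QState V)) :=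
  Submodule.span ℂ (creProd '' 𝒴)

lemma creSpan_union (𝒴 𝒵 : Set (Finset V)) : creSpan V (𝒴 ∪ 𝒵) = creSpan V 𝒴 ⊔ creSpan V 𝒵 := by
  rw [creSpan, Set.image_union, Submodule.span_union, creSpan, creSpan]

lemma Commute.of_mem_creSpan {𝒴 𝒵 : Set (Finset V)} {a b : Module.End ℂ (QState V)}
    (ha : a ∈ creSpan V 𝒴) (hb : b ∈ creSpan V 𝒵) : Commute a b :=
  Commute.span_left (Set.forall_mem_image.mpr fun Y _ =>
    Commute.span_right (Set.forall_mem_image.mpr fun Z _ => creProd_commute Y Z) b hb) a ha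

lemma sq_eq_zero_of_mem_creSpan (i : V) {a : Module.End ℂ (QState V)}
    (ha : a ∈ creSpan V {Y | i ∈ Y}) : a ^ 2 = 0 := by
  have hle : creSpan V {Y | i ∈ Y} ≤ (creSpan V Set.univ).map (LinearMap.mulLeft ℂ (creOp i)) := by
    refine Submodule.span_le.mpr ?_
    rintro _ ⟨Y, hY, rfl⟩
    exact ⟨creProd (Y.erase i), Submodule.subset_span ⟨_, trivial, rfl⟩,
      (creProd_eq_creOp_mul hY).symm⟩
  obtain ⟨r, hr, rfl⟩ := hle ha
  have hcomm : Commute (creOp i) r :=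
    Commute.span_right (Set.forall_mem_image.mpr fun Z _ => creOp_commute_creProd i Z) r hr
  rw [LinearMap.mulLeft_apply, hcomm.mul_pow, sq, creOp_mul_self, zero_mul]

lemma pow_card_succ_eq_zero_of_mem_creSpan {X : Finset V} {a : Module.End ℂ (QState V)}
    (ha : a ∈ creSpan V {Y | ¬Disjoint Y X}) : a ^ (X.card + 1) = 0 := by
  induction X using Finset.induction_on generalizing a with
  | empty => simpa [creSpan] using ha
  | insert i s hi ih =>
    have hsplit :
        {Y : Finset V | ¬Disjoint Y (insert i s)} = {Y | i ∈ Y} ∪ {Y | ¬Disjoint Y s} := by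
      ext Y
      simp [Finset.disjoint_insert_right, or_iff_not_imp_left]
    rw [hsplit, creSpan_union] at ha
    obtain ⟨u, hu, w, hw, rfl⟩ := Submodule.mem_sup.mp ha
    rw [Finset.card_insert_of_notMem hi]
    exact (Commute.of_mem_creSpan hu hw).add_pow_eq_zero_of_add_le_succ_of_pow_eq_zero
      (sq_eq_zero_of_mem_creSpan i hu) (ih hw) (by omega)

lemma SupportedOn.commute_of_mem_creSpan {O : Module.End ℂ (QState V)} {X : Finset V}
    (hO : SupportedOn O ↑X) {a : Module.End ℂ (QState V)} (ha : a ∈ creSpan V {Y | Disjoint Y X}) :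
    Commute O a :=
  Commute.span_right (Set.forall_mem_image.mpr fun _ hY => hO.commute_creProd hY) a ha

end CreationProducts

section Locality

variable {V : Type*} [Fintype V] [DecidableEq V] {Q : Module.End ℂ (QState V)}

lemma SupportedOn.commutatorMap_pow_apply_eq_zero (hQ : Q ∈ creSpan V Set.univ)
    {O : Module.End ℂ (QState V)} {X : Finset V} (hO : SupportedOn O ↑X) :
    (commutatorMap ℂ Q ^ (2 * X.card + 1)) O = 0 := by
  rw [← Set.compl_union_self {Y : Finset V | Disjoint Y X}, creSpan_union] at hQ
  obtain ⟨a, ha, b, hb, rfl⟩ := Submodule.mem_sup.mp hQ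
  rw [commutatorMap_add_pow_apply (Commute.of_mem_creSpan ha hb)
      (hO.commute_of_mem_creSpan hb).symm,
    commutatorMap_pow_eq_zero (pow_card_succ_eq_zero_of_mem_creSpan ha), LinearMap.zero_apply]

lemma IsKLocal.commutatorMap_pow_apply_eq_zero (hQ : Q ∈ creSpan V Set.univ)
    {k : ℕ} {O : Module.End ℂ (QState V)} (hO : IsKLocal k O) :
    (commutatorMap ℂ Q ^ (2 * k + 1)) O = 0 := by
  obtain ⟨n, h, X, hsupp, hcard, rfl⟩ := hO
  refine (map_sum _ _ _).trans (Finset.sum_eq_zero fun t _ => ?_)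
  rw [show 2 * k + 1 = 2 * (k - (X t).card) + (2 * (X t).card + 1) by have := hcard t; omega,
    pow_add, Module.End.mul_apply, (hsupp t).commutatorMap_pow_apply_eq_zero hQ, map_zero]

end Locality

/-- For any `Q†` in the span of products of creation operators:
(i) the (2k+1)-fold iterated commutator of any k-local operator with `Q†` vanishes, and
(ii) a k-local operator annihilating `(Q†)^q |0̄⟩` for all `q ≤ 2k` annihilates the
whole tower. -/
theorem product_raising_operator_properties
    {V : Type*} [Fintype V] [DecidableEq V]
    (Qd : Module.End ℂ (QState V))
    (hQd : Qd ∈ Submodule.span ℂ (Set.range fun Y : Finset V => creProd Y)) :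
    (∀ k : ℕ, 0 < k → ∀ O : Module.End ℂ (QState V), IsKLocal k O →
      ∀ C : ℕ → Module.End ℂ (QState V), C 0 = O →
        (∀ m, C (m + 1) = C m * Qd - Qd * C m) → C (2 * k + 1) = 0) ∧
    (∀ k : ℕ, 0 < k → ∀ H : Module.End ℂ (QState V), IsKLocal k H →
      (∀ q ≤ 2 * k, H ((Qd ^ q) (vac V)) = 0) → ∀ p : ℕ, H ((Qd ^ p) (vac V)) = 0) := by
  have hQ : Qd ∈ creSpan V Set.univ := by rwa [creSpan, Set.image_univ]
  refine ⟨fun k _ O hO C hC0 hC => ?_, fun k _ H hH hvac =>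
    apply_pow_eq_zero_of_commutatorMap_pow_eq_zero Qd (vac V)
      (hH.commutatorMap_pow_apply_eq_zero hQ) fun q hq => hvac q (by omega)⟩
  have hC_eq : ∀ m, C m = (commutatorMap ℂ Qd ^ m) O := by
    intro m
    induction m with
    | zero => exact hC0
    | succ m ih => rw [hC, ih, pow_succ', Module.End.mul_apply, commutatorMap_apply]
  rw [hC_eq]
  exact hO.commutatorMap_pow_apply_eq_zero hQ
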